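/- arXiv:1801.03341 — 4 statements merged into one kernel-verified Lean document; each statement's English description precedes it below -/
import Mathlib

section
/- Let 0 → M1 →f M2 →g M3 → 0 be a short exact sequence of finitely presented torsion O-modules. For a ∈ O and a finitely presented torsion O-module M, let F_a(M) ⊆ M ⊗_O k denote the image of the a-torsion submodule M[a] = { x ∈ M : a·x = 0 } under the quotient map M → M/mM = M ⊗_O k; the maps f and g induce k-linear maps F_a(M1) → F_a(M2) → F_a(M3). Then the sequence 0 → M1 → M2 → M3 → 0 splits if and only if, for every a ∈ O, the induced complex 0 → F_a(M1) → F_a(M2) → F_a(M3) → 0 is a short exact sequence of k-vector spaces. -/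
/-!
If `h` is a retraction of `f`, then `g` has a section `s`, and the conditions on `F_a` follow by
chasing elements through `f`, `h`, `g` and `s`.

Conversely, a finitely presented module over a valuation ring is a finite product of cyclic
modules `O ⧸ (c i)`: in a finite set of relations, a coordinate divisible by all the others is a
pivot that splits off one cyclic factor. Writing `M3 ≅ ∏ i, O ⧸ (c i)`, surjectivity of
`F_(c i)(M2) → F_(c i)(M3)` lifts the `i`-th generator modulo `𝔪` to a `c i`-torsion element of
`M2`. This gives `s₀ : M3 → M2` with `g ∘ s₀ ≡ id` modulo `𝔪`. By Nakayama, `g ∘ s₀` is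
surjective, hence an automorphism of the finitely generated module `M3`, and
`s₀ ∘ (g ∘ s₀)⁻¹` is a section of `g`.
-/

open Submodule

section Structure

variable {R M N F : Type*} [CommRing R] [AddCommGroup M] [Module R M] [AddCommGroup N]
  [Module R N] [AddCommGroup F] [Module R F]

noncomputable def Submodule.quotientProdEquiv (p : Submodule R M) (q : Submodule R N) :
    ((M × N) ⧸ p.prod q) ≃ₗ[R] (M ⧸ p) × (N ⧸ q) :=
  (quotEquivOfEq _ _ (by rw [LinearMap.ker_prodMap, ker_mkQ, ker_mkQ])).trans
    (LinearMap.quotKerEquivOfSurjective (p.mkQ.prodMap q.mkQ)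
      (Prod.map_surjective.mpr ⟨p.mkQ_surjective, q.mkQ_surjective⟩))

variable (R) in
/-- The shear `(a, y) ↦ (a, y - a • u)`. -/
noncomputable def shear (u : F) : (R × F) ≃ₗ[R] R × F :=
  (LinearEquiv.refl R R).skewProd (LinearEquiv.refl R F) (-LinearMap.toSpanSingleton R F u)

theorem map_shear_eq_prod {P : Submodule R (R × F)} {d : R} {u : F} (hv : (d, d • u) ∈ P)
    (hd : ∀ x ∈ P, d ∣ x.1) :
    P.map (shear R u : (R × F) →ₗ[R] R × F) =
      (span R {d}).prod (P.comap (LinearMap.inr R R F)) := by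
  ext ⟨a, y⟩
  simp only [map_equiv_eq_comap_symm, mem_comap, LinearEquiv.coe_coe, shear,
    LinearEquiv.skewProd_symm_apply, mem_prod, mem_span_singleton, LinearMap.inr_apply,
    LinearEquiv.refl_symm, LinearEquiv.refl_apply, LinearMap.neg_apply,
    LinearMap.toSpanSingleton_apply, sub_neg_eq_add]
  constructor
  · intro h
    obtain ⟨r, rfl⟩ := hd _ h
    refine ⟨⟨r, mul_comm r d⟩, ?_⟩
    convert P.sub_mem h (P.smul_mem r hv) using 1
    ext <;> simp [smul_smul, mul_comm]
  · rintro ⟨⟨r, rfl⟩, hy⟩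
    convert P.add_mem (P.smul_mem r hv) hy using 1
    ext <;> simp [smul_smul, add_comm]

theorem exists_pivot [IsDomain R] [ValuationRing R] {ι : Type*} [Fintype ι] [Nonempty ι]
    {P : Submodule R (ι → R)} (hP : P.FG) : ∃ v ∈ P, ∃ j, ∀ x ∈ P, ∀ k, v j ∣ x k := by
  classical
  obtain ⟨S, rfl⟩ := hP
  -- `0` is thrown in so that the family is nonempty even when `S = ∅`
  obtain ⟨⟨v, j⟩, hvj, hmax⟩ := (insert 0 S ×ˢ Finset.univ).exists_max_image
    (fun p : (ι → R) × ι => Ideal.span {p.1 p.2}) ⟨(0, Classical.arbitrary ι), by simp⟩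
  refine ⟨v, ?_, j, fun x hx k => ?_⟩
  · rcases Finset.mem_insert.mp (Finset.mem_product.mp hvj).1 with rfl | hv
    exacts [zero_mem _, subset_span hv]
  · have hS : span R (S : Set (ι → R)) ≤
        Submodule.comap (LinearMap.proj k : (ι → R) →ₗ[R] R) (Ideal.span {v j}) :=
      span_le.mpr fun s hs =>
        hmax (s, k) (by simp [Finset.mem_coe.mp hs]) (Ideal.mem_span_singleton_self _)
    exact Ideal.mem_span_singleton.mp (hS hx)

variable (R) in
noncomputable def pivotEquiv {n : ℕ} (j : Fin (n + 1)) :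
    (Fin (n + 1) → R) ≃ₗ[R] R × (Fin n → R) :=
  (LinearEquiv.funCongrLeft R R (Equiv.swap 0 j)).trans (Fin.consLinearEquiv R fun _ => R).symm

@[simp] theorem pivotEquiv_apply_fst {n : ℕ} (j : Fin (n + 1)) (x : Fin (n + 1) → R) :
    (pivotEquiv R j x).1 = x j := by
  simp [pivotEquiv]

@[simp] theorem pivotEquiv_apply_snd {n : ℕ} (j : Fin (n + 1)) (x : Fin (n + 1) → R)
    (i : Fin n) : (pivotEquiv R j x).2 i = x (Equiv.swap 0 j i.succ) := by
  simp [pivotEquiv, Fin.tail]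

theorem exists_quotient_equiv_pi_cyclic [IsDomain R] [ValuationRing R] {n : ℕ}
    {P : Submodule R (Fin n → R)} (hP : P.FG) :
    ∃ (m : ℕ) (c : Fin m → R), Nonempty (((Fin n → R) ⧸ P) ≃ₗ[R] Π i, R ⧸ span R {c i}) := by
  induction n with
  | zero => exact ⟨0, Fin.elim0, ⟨LinearEquiv.ofSubsingleton _ _⟩⟩
  | succ n ih =>
    obtain ⟨v, hv, j, hdvd⟩ := exists_pivot hP
    choose u hu using fun i : Fin n => hdvd v hv (Equiv.swap 0 j i.succ)
    have hpivot : pivotEquiv R j v = (v j, v j • u) :=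
      Prod.ext (pivotEquiv_apply_fst j v) (funext fun i => by simp [hu])
    have hmap := map_shear_eq_prod (P := P.map (pivotEquiv R j : _ →ₗ[R] R × (Fin n → R)))
      (d := v j) (u := u) ⟨v, hv, hpivot⟩ (by rintro _ ⟨x, hx, rfl⟩; simpa using hdvd x hx j)
    have hP' := ((hP.map (pivotEquiv R j : _ →ₗ[R] R × (Fin n → R))).map
      (shear R u : R × (Fin n → R) →ₗ[R] R × (Fin n → R))).map (LinearMap.snd R R (Fin n → R))
    rw [hmap, prod_map_snd] at hP'
    obtain ⟨m, c, ⟨e⟩⟩ := ih hP'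
    exact ⟨m + 1, Fin.cons (v j) c, ⟨Submodule.Quotient.equiv P _ (pivotEquiv R j) rfl ≪≫ₗ
      Submodule.Quotient.equiv _ _ (shear R u) hmap ≪≫ₗ quotientProdEquiv _ _ ≪≫ₗ
      (LinearEquiv.refl R _).prodCongr e ≪≫ₗ
      Fin.consLinearEquiv R fun i => R ⧸ span R {(Fin.cons (v j) c : Fin (m + 1) → R) i}⟩⟩

theorem exists_equiv_pi_cyclic [IsDomain R] [ValuationRing R] [Module.FinitePresentation R M] :
    ∃ (m : ℕ) (c : Fin m → R), Nonempty (M ≃ₗ[R] Π i, R ⧸ span R {c i}) := by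
  obtain ⟨n, P, e, hP⟩ := Module.FinitePresentation.exists_fin R M
  obtain ⟨m, c, ⟨e'⟩⟩ := exists_quotient_equiv_pi_cyclic hP
  exact ⟨m, c, ⟨e ≪≫ₗ e'⟩⟩

end Structure

section Splitting

open IsLocalRing

variable {R M N : Type*} [CommRing R] [AddCommGroup M] [Module R M] [AddCommGroup N]
  [Module R N]

theorem exists_lift_pi_cyclic_mod {ι : Type*} [Fintype ι] [DecidableEq ι] (c : ι → R)
    (g : M →ₗ[R] N) (t : (Π i, R ⧸ span R {c i}) →ₗ[R] N) (Q : Submodule R N)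
    (h : ∀ i, ∃ x : M, c i • x = 0 ∧
      g x - t (Pi.single i (Submodule.Quotient.mk 1)) ∈ Q) :
    ∃ s₀ : (Π i, R ⧸ span R {c i}) →ₗ[R] M, Q.mkQ ∘ₗ g ∘ₗ s₀ = Q.mkQ ∘ₗ t := by
  choose x hx hxQ using h
  refine ⟨LinearMap.lsum R _ R fun i =>
    (span R {c i}).liftQ (LinearMap.toSpanSingleton R M (x i))
      ((span_singleton_le_iff_mem _ _).mpr (hx i)), ?_⟩
  refine LinearMap.pi_ext' fun i => linearMap_qext _ (LinearMap.ext_ring ?_)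
  simp only [LinearMap.comp_apply, mkQ_apply, LinearMap.coe_single, LinearMap.lsum_piSingle,
    liftQ_apply, LinearMap.toSpanSingleton_apply, one_smul]
  exact (Submodule.Quotient.eq Q).mpr (hxQ i)

theorem exists_rightInverse_of_mkQ_comp_eq [IsLocalRing R] [Module.Finite R N]
    (g : M →ₗ[R] N) (s₀ : N →ₗ[R] M)
    (h : (maximalIdeal R • ⊤ : Submodule R N).mkQ ∘ₗ g ∘ₗ s₀ =
      (maximalIdeal R • (⊤ : Submodule R N)).mkQ) :
    ∃ s : N →ₗ[R] M, g ∘ₗ s = LinearMap.id := by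
  have hsurj : Function.Surjective (g ∘ₗ s₀) := by
    rw [← LinearMap.range_eq_top, ← IsLocalRing.map_mkQ_eq_top, ← LinearMap.range_comp, h,
      range_mkQ]
  let φ := LinearEquiv.ofBijective (g ∘ₗ s₀)
    ⟨OrzechProperty.injective_of_surjective_endomorphism _ hsurj, hsurj⟩
  exact ⟨s₀ ∘ₗ φ.symm, LinearMap.ext φ.apply_symm_apply⟩

theorem exists_rightInverse_of_torsionBy_le [IsDomain R] [ValuationRing R]
    [Module.FinitePresentation R N] (g : M →ₗ[R] N)
    (h : ∀ a : R, torsionBy R N a ≤ (torsionBy R M a).map g ⊔ maximalIdeal R • ⊤) :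
    ∃ s : N →ₗ[R] M, g ∘ₗ s = LinearMap.id := by
  classical
  obtain ⟨m, c, ⟨e⟩⟩ := exists_equiv_pi_cyclic (R := R) (M := N)
  obtain ⟨s₀, hs₀⟩ := exists_lift_pi_cyclic_mod c g e.symm.toLinearMap _ fun i => by
    have hy : e.symm (Pi.single i (Submodule.Quotient.mk 1)) ∈ torsionBy R N (c i) := by
      rw [mem_torsionBy_iff, ← map_smul, ← Pi.single_smul, ← Submodule.Quotient.mk_smul,
        smul_eq_mul, mul_one, (Submodule.Quotient.mk_eq_zero _).mpr (mem_span_singleton_self _),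
        Pi.single_zero, map_zero]
    obtain ⟨_, ⟨x, hx, rfl⟩, z, hz, hxz⟩ := mem_sup.mp (h _ hy)
    exact ⟨x, hx, by rw [LinearEquiv.coe_coe, ← hxz, sub_add_cancel_left]; exact neg_mem hz⟩
  exact exists_rightInverse_of_mkQ_comp_eq g (s₀ ∘ₗ e.toLinearMap)
    (LinearMap.ext fun y => by simpa using LinearMap.congr_fun hs₀ (e y))

end Splitting

section Induced

variable {R M N M₁ M₂ M₃ : Type*} [CommRing R] [AddCommGroup M] [Module R M] [AddCommGroup N]
  [Module R N] [AddCommGroup M₁] [Module R M₁] [AddCommGroup M₂] [Module R M₂] [AddCommGroup M₃]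
  [Module R M₃]

theorem map_torsionBy_le (φ : M →ₗ[R] N) (a : R) :
    (torsionBy R M a).map φ ≤ torsionBy R N a := by
  rintro _ ⟨x, hx, rfl⟩
  rw [SetLike.mem_coe, mem_torsionBy_iff] at hx
  rw [mem_torsionBy_iff, ← map_smul, hx, map_zero]

theorem map_torsionBy_eq_of_comp_eq_id {g : M →ₗ[R] N} {s : N →ₗ[R] M}
    (hs : g ∘ₗ s = LinearMap.id) (a : R) : (torsionBy R M a).map g = torsionBy R N a :=
  (map_torsionBy_le g a).antisymm fun z hz =>
    ⟨s z, map_torsionBy_le s a ⟨z, hz, rfl⟩, LinearMap.congr_fun hs z⟩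

theorem map_induced_map_mkQ {P : Submodule R M} {Q : Submodule R N} {φ : M →ₗ[R] N}
    {φbar : (M ⧸ P) →ₗ[R] N ⧸ Q}
    (hφ : ∀ x, φbar (Submodule.Quotient.mk x) = Submodule.Quotient.mk (φ x))
    (p : Submodule R M) : (p.map P.mkQ).map φbar = (p.map φ).map Q.mkQ := by
  rw [← map_comp, ← map_comp]
  congr 1
  exact LinearMap.ext hφ

theorem injective_induced_of_retraction (I : Ideal R) {f : M →ₗ[R] N} {h : N →ₗ[R] M}
    (hhf : h ∘ₗ f = LinearMap.id)
    {fbar : (M ⧸ (I • ⊤ : Submodule R M)) →ₗ[R] N ⧸ (I • ⊤ : Submodule R N)}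
    (hfbar : ∀ x, fbar (Submodule.Quotient.mk x) = Submodule.Quotient.mk (f x)) :
    Function.Injective fbar := by
  refine (injective_iff_map_eq_zero fbar).mpr fun x hx => ?_
  obtain ⟨x, rfl⟩ := Submodule.Quotient.mk_surjective _ x
  rw [hfbar, Submodule.Quotient.mk_eq_zero] at hx
  have hhfx : h (f x) = x := LinearMap.congr_fun hhf x
  rw [Submodule.Quotient.mk_eq_zero, ← hhfx]
  exact smul_top_le_comap_smul_top I h hx

theorem map_induced_torsionBy_eq_inf_ker (I : Ideal R) {f : M₁ →ₗ[R] M₂} {g : M₂ →ₗ[R] M₃}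
    {h : M₂ →ₗ[R] M₁} (hhf : h ∘ₗ f = LinearMap.id) (hfg : Function.Exact f g)
    (hg : Function.Surjective g)
    {fbar : (M₁ ⧸ (I • ⊤ : Submodule R M₁)) →ₗ[R] M₂ ⧸ (I • ⊤ : Submodule R M₂)}
    {gbar : (M₂ ⧸ (I • ⊤ : Submodule R M₂)) →ₗ[R] M₃ ⧸ (I • ⊤ : Submodule R M₃)}
    (hfbar : ∀ x, fbar (Submodule.Quotient.mk x) = Submodule.Quotient.mk (f x))
    (hgbar : ∀ y, gbar (Submodule.Quotient.mk y) = Submodule.Quotient.mk (g y)) (a : R) :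
    ((torsionBy R M₁ a).map (I • ⊤ : Submodule R M₁).mkQ).map fbar =
      (torsionBy R M₂ a).map (I • ⊤ : Submodule R M₂).mkQ ⊓ LinearMap.ker gbar := by
  rw [map_induced_map_mkQ hfbar]
  refine le_antisymm (le_inf (map_mono (map_torsionBy_le f a)) ?_) ?_
  · rintro _ ⟨_, ⟨x, -, rfl⟩, rfl⟩
    simp [hgbar, hfg.apply_apply_eq_zero]
  · rintro _ ⟨⟨y, hy, rfl⟩, hy₀⟩
    have hgy : g y ∈ (I • ⊤ : Submodule R M₂).map g := by
      rw [map_smul'', Submodule.map_top, LinearMap.range_eq_top.mpr hg,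
        ← Submodule.Quotient.mk_eq_zero, ← hgbar]
      exact hy₀
    obtain ⟨z, hz, hzy⟩ := hgy
    obtain ⟨w, hw⟩ := (hfg (y - z)).mp (by rw [map_sub, hzy, sub_self])
    have hhfw : h (f w) = w := LinearMap.congr_fun hhf w
    have hy' : f (h y) - y = f (h z) - z := by
      rw [eq_add_of_sub_eq hw.symm, map_add, map_add, hhfw]
      abel
    refine ⟨f (h y), ⟨h y, map_torsionBy_le h a ⟨y, hy, rfl⟩, rfl⟩, ?_⟩
    rw [mkQ_apply, mkQ_apply, Submodule.Quotient.eq, hy']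
    exact sub_mem (smul_top_le_comap_smul_top I (f ∘ₗ h) hz) hz

end Induced

theorem statement8_general {O : Type*} [CommRing O] [IsDomain O] [ValuationRing O]
    {M1 M2 M3 : Type*}
    [AddCommGroup M1] [Module O M1] [AddCommGroup M2] [Module O M2]
    [AddCommGroup M3] [Module O M3]
    (hM3 : Module.FinitePresentation O M3 ∧ Module.IsTorsion O M3)
    (f : M1 →ₗ[O] M2) (g : M2 →ₗ[O] M3)
    (hf : Function.Injective f) (hg : Function.Surjective g)
    (hfg : LinearMap.range f = LinearMap.ker g)
    (fbar : (M1 ⧸ (IsLocalRing.maximalIdeal O • ⊤ : Submodule O M1)) →ₗ[O]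
        (M2 ⧸ (IsLocalRing.maximalIdeal O • ⊤ : Submodule O M2)))
    (gbar : (M2 ⧸ (IsLocalRing.maximalIdeal O • ⊤ : Submodule O M2)) →ₗ[O]
        (M3 ⧸ (IsLocalRing.maximalIdeal O • ⊤ : Submodule O M3)))
    (hfbar : ∀ x : M1, fbar (Submodule.Quotient.mk x) = Submodule.Quotient.mk (f x))
    (hgbar : ∀ y : M2, gbar (Submodule.Quotient.mk y) = Submodule.Quotient.mk (g y)) :
    (∃ h : M2 →ₗ[O] M1, h.comp f = LinearMap.id) ↔
      ∀ a : O,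
        (∀ x ∈ Submodule.map
            (Submodule.mkQ (IsLocalRing.maximalIdeal O • ⊤ : Submodule O M1))
            (torsionBy O M1 a), fbar x = 0 → x = 0) ∧
        Submodule.map fbar
            (Submodule.map (Submodule.mkQ (IsLocalRing.maximalIdeal O • ⊤ : Submodule O M1))
              (torsionBy O M1 a)) =
          Submodule.map (Submodule.mkQ (IsLocalRing.maximalIdeal O • ⊤ : Submodule O M2))
              (torsionBy O M2 a) ⊓ LinearMap.ker gbar ∧
        Submodule.map gbar
            (Submodule.map (Submodule.mkQ (IsLocalRing.maximalIdeal O • ⊤ : Submodule O M2))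
              (torsionBy O M2 a)) =
          Submodule.map (Submodule.mkQ (IsLocalRing.maximalIdeal O • ⊤ : Submodule O M3))
            (torsionBy O M3 a) := by
  have hexact : Function.Exact f g := LinearMap.exact_iff.mpr hfg.symm
  have hsplit := (hexact.split_tfae hf hg).out 0 1
  constructor
  · rintro ⟨h, hhf⟩
    obtain ⟨s, hs⟩ := hsplit.mpr ⟨h, hhf⟩
    refine fun a => ⟨fun x _ hx => injective_induced_of_retraction _ hhf hfbar
      (hx.trans (map_zero fbar).symm),
      map_induced_torsionBy_eq_inf_ker _ hhf hexact hg hfbar hgbar a, ?_⟩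
    rw [map_induced_map_mkQ hgbar, map_torsionBy_eq_of_comp_eq_id hs]
  · intro hF
    have : Module.FinitePresentation O M3 := hM3.1
    refine hsplit.mp (exists_rightInverse_of_torsionBy_le g fun a => ?_)
    rw [sup_comm, ← comap_map_mkQ, ← map_induced_map_mkQ hgbar, (hF a).2.2]
    exact le_comap_map _ _

/-- Let `0 → M1 →f M2 →g M3 → 0` be a short exact sequence of finitely
presented torsion modules over a valuation ring `O` with maximal ideal `m`.  For `a ∈ O`,
`F_a(M) ⊆ M ⊗ k = M/mM` denotes the image of the `a`-torsion submodule `M[a]` under the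
quotient map `M → M/mM`; `fbar` and `gbar` are the maps induced by `f` and `g` on `M/mM`'s.
Then the sequence splits iff for every `a ∈ O` the induced complex
`0 → F_a(M1) → F_a(M2) → F_a(M3) → 0` is a short exact sequence. -/
theorem statement8 {O : Type*} [CommRing O] [IsDomain O] [ValuationRing O]
    {M1 M2 M3 : Type*}
    [AddCommGroup M1] [Module O M1] [AddCommGroup M2] [Module O M2]
    [AddCommGroup M3] [Module O M3]
    (hM1 : Module.FinitePresentation O M1 ∧ Module.IsTorsion O M1)
    (hM2 : Module.FinitePresentation O M2 ∧ Module.IsTorsion O M2)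
    (hM3 : Module.FinitePresentation O M3 ∧ Module.IsTorsion O M3)
    (f : M1 →ₗ[O] M2) (g : M2 →ₗ[O] M3)
    (hf : Function.Injective f) (hg : Function.Surjective g)
    (hfg : LinearMap.range f = LinearMap.ker g)
    (fbar : (M1 ⧸ (IsLocalRing.maximalIdeal O • ⊤ : Submodule O M1)) →ₗ[O]
        (M2 ⧸ (IsLocalRing.maximalIdeal O • ⊤ : Submodule O M2)))
    (gbar : (M2 ⧸ (IsLocalRing.maximalIdeal O • ⊤ : Submodule O M2)) →ₗ[O]
        (M3 ⧸ (IsLocalRing.maximalIdeal O • ⊤ : Submodule O M3)))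
    (hfbar : ∀ x : M1, fbar (Submodule.Quotient.mk x) = Submodule.Quotient.mk (f x))
    (hgbar : ∀ y : M2, gbar (Submodule.Quotient.mk y) = Submodule.Quotient.mk (g y)) :
    (∃ h : M2 →ₗ[O] M1, h.comp f = LinearMap.id) ↔
      ∀ a : O,
        (∀ x ∈ Submodule.map
            (Submodule.mkQ (IsLocalRing.maximalIdeal O • ⊤ : Submodule O M1))
            (torsionBy O M1 a), fbar x = 0 → x = 0) ∧
        Submodule.map fbar
            (Submodule.map (Submodule.mkQ (IsLocalRing.maximalIdeal O • ⊤ : Submodule O M1))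
              (torsionBy O M1 a)) =
          Submodule.map (Submodule.mkQ (IsLocalRing.maximalIdeal O • ⊤ : Submodule O M2))
              (torsionBy O M2 a) ⊓ LinearMap.ker gbar ∧
        Submodule.map gbar
            (Submodule.map (Submodule.mkQ (IsLocalRing.maximalIdeal O • ⊤ : Submodule O M2))
              (torsionBy O M2 a)) =
          Submodule.map (Submodule.mkQ (IsLocalRing.maximalIdeal O • ⊤ : Submodule O M3))
            (torsionBy O M3 a) :=
  statement8_general hM3 f g hf hg hfg fbar gbar hfbar hgbar
end

section
/- Let 0 → V1 → V2 → V3 → 0 be an exact sequence of finite-dimensional K-vector spaces and let L2 be an O-lattice in V2. Then the preimage L1 of L2 in V1 (equivalently, L2 ∩ V1, viewing V1 as a subspace of V2) is an O-lattice in V1, the image L3 of L2 in V3 is an O-lattice in V3, all three lattices are finite free O-modules, and the resulting short exact sequence 0 → L1 → L2 → L3 → 0 of O-modules splits. -/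
/-!
Over a valuation ring a finitely generated torsion-free module is flat (valuation rings are
Bézout) and hence free (they are local). So `L2` and its image `L3` are free; as `L3` is
projective, `0 → L1 → L2 → L3 → 0` splits, making `L1` a direct summand of `L2`, hence finitely
generated and free as well. That `L1` and `L3` span `V1` and `V3` is a matter of clearing
denominators and of surjectivity of `g`.
-/

open Submodule

theorem Module.free_of_isTorsionFree_of_valuationRing {R M : Type*} [CommRing R] [IsDomain R]
    [ValuationRing R] [AddCommGroup M] [Module R M] [Module.Finite R M] [IsTorsionFree R M] :
    Module.Free R M :=
  have : Module.Flat R M := Module.Flat.flat_iff_torsion_eq_bot_of_isBezout.mpr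
    (Submodule.isTorsionFree_iff_torsion_eq_bot.mp ‹_›)
  Module.free_of_flat_of_isLocalRing

theorem Function.Exact.exists_retraction_of_projective {R M N P : Type*} [Ring R]
    [AddCommGroup M] [AddCommGroup N] [AddCommGroup P] [Module R M] [Module R N] [Module R P]
    [Module.Projective R P] {f : M →ₗ[R] N} {g : N →ₗ[R] P} (h : Function.Exact f g)
    (hf : Function.Injective f) (hg : Function.Surjective g) :
    ∃ l : N →ₗ[R] M, l ∘ₗ f = LinearMap.id :=
  ((h.split_tfae hf hg).out 0 1).mp (Module.projective_lifting_property g LinearMap.id hg)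

section RestrictExact

variable {R M₁ M₂ M₃ : Type*} [Ring R] [AddCommGroup M₁] [AddCommGroup M₂] [AddCommGroup M₃]
  [Module R M₁] [Module R M₂] [Module R M₃] {f : M₁ →ₗ[R] M₂} {g : M₂ →ₗ[R] M₃}
  (L : Submodule R M₂)

theorem LinearMap.injective_restrict_comap (hf : Function.Injective f) :
    Function.Injective (f.restrict (p := L.comap f) (q := L) fun _ hx => hx) :=
  fun _ _ hxy => Subtype.ext (hf (congrArg Subtype.val hxy))

theorem LinearMap.surjective_restrict_map :
    Function.Surjective (g.restrict (p := L) (q := L.map g) fun _ hx => mem_map_of_mem hx) := by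
  rintro ⟨_, x, hx, rfl⟩
  exact ⟨⟨x, hx⟩, rfl⟩

theorem Function.Exact.restrict_comap_map (h : Function.Exact f g) :
    Function.Exact (f.restrict (p := L.comap f) (q := L) fun _ hx => hx)
      (g.restrict (p := L) (q := L.map g) fun _ hx => mem_map_of_mem hx) := by
  intro x
  constructor
  · intro hx
    obtain ⟨y, hy⟩ := (h x).mp (congrArg Subtype.val hx)
    exact ⟨⟨y, show f y ∈ L from hy ▸ x.2⟩, Subtype.ext hy⟩
  · rintro ⟨y, rfl⟩
    exact Subtype.ext (h.apply_apply_eq_zero y)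

end RestrictExact

theorem Submodule.free_of_valuationRing {O : Type*} (K : Type*) {V : Type*} [CommRing O]
    [IsDomain O] [ValuationRing O] [Field K] [Algebra O K] [FaithfulSMul O K]
    [AddCommGroup V] [Module K V] [Module O V] [IsScalarTower O K V]
    (L : Submodule O V) [Module.Finite O L] : Module.Free O L :=
  have := Module.IsTorsionFree.trans_faithfulSMul O K V
  Module.free_of_isTorsionFree_of_valuationRing

theorem Submodule.span_map_eq_top {O K V W : Type*} [CommRing O] [Field K] [Algebra O K]
    [AddCommGroup V] [Module K V] [Module O V] [IsScalarTower O K V]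
    [AddCommGroup W] [Module K W] [Module O W] [IsScalarTower O K W]
    {g : V →ₗ[K] W} (hg : Function.Surjective g) {L : Submodule O V}
    (hL : span K (L : Set V) = ⊤) :
    span K (L.map (g.restrictScalars O) : Set W) = ⊤ := by
  rw [map_coe, LinearMap.coe_restrictScalars, span_image, hL, map_top,
    LinearMap.range_eq_top.mpr hg]

section Lattice

variable {O K V : Type*} [CommRing O] [Field K] [Algebra O K] [IsFractionRing O K]
  [AddCommGroup V] [Module K V] [Module O V] [IsScalarTower O K V]

theorem Submodule.exists_smul_mem_of_mem_span_fractionRing {M : Submodule O V} {x : V}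
    (hx : x ∈ span K (M : Set V)) : ∃ a ∈ nonZeroDivisors O, a • x ∈ M := by
  obtain ⟨n, c, m, rfl⟩ := mem_span_set'.mp hx
  obtain ⟨b, hb⟩ := IsLocalization.exist_integer_multiples_of_finite (nonZeroDivisors O) c
  choose c' hc' using hb
  refine ⟨b, b.2, ?_⟩
  rw [Finset.smul_sum]
  refine sum_mem fun i _ => ?_
  rw [← smul_assoc, ← hc' i, algebraMap_smul]
  exact M.smul_mem _ (m i).2

theorem Submodule.span_comap_eq_top {W : Type*} [AddCommGroup W] [Module K W] [Module O W]
    [IsScalarTower O K W] (f : W →ₗ[K] V) {L : Submodule O V} (hL : span K (L : Set V) = ⊤) :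
    span K (L.comap (f.restrictScalars O) : Set W) = ⊤ := by
  refine eq_top_iff.mpr fun w _ => ?_
  obtain ⟨a, ha, haw⟩ := exists_smul_mem_of_mem_span_fractionRing (hL ▸ mem_top : f w ∈ _)
  have ha' : algebraMap O K a ≠ 0 := (IsLocalization.map_units K ⟨a, ha⟩).ne_zero
  have hmem : a • w ∈ L.comap (f.restrictScalars O) := by simpa using haw
  rw [← inv_smul_smul₀ ha' w, algebraMap_smul]
  exact smul_mem _ _ (subset_span hmem)

end Lattice

theorem statement10_general {O : Type*} [CommRing O] [IsDomain O] [ValuationRing O]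
    {K : Type*} [Field K] [Algebra O K] [IsFractionRing O K]
    {V1 V2 V3 : Type*}
    [AddCommGroup V1] [Module K V1] [Module O V1] [IsScalarTower O K V1]
    [AddCommGroup V2] [Module K V2] [Module O V2] [IsScalarTower O K V2]
    [AddCommGroup V3] [Module K V3] [Module O V3] [IsScalarTower O K V3]
    (f : V1 →ₗ[K] V2) (g : V2 →ₗ[K] V3)
    (hf : Function.Injective f) (hg : Function.Surjective g)
    (hfg : LinearMap.range f = LinearMap.ker g)
    (L2 : Submodule O V2)
    (hL2 : L2.FG ∧ Submodule.span K (L2 : Set V2) = ⊤) :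
    let L1 : Submodule O V1 := Submodule.comap (f.restrictScalars O) L2
    let L3 : Submodule O V3 := Submodule.map (g.restrictScalars O) L2
    (L1.FG ∧ Submodule.span K (L1 : Set V1) = ⊤) ∧
    (L3.FG ∧ Submodule.span K (L3 : Set V3) = ⊤) ∧
    (Module.Finite O L1 ∧ Module.Free O L1) ∧
    (Module.Finite O L2 ∧ Module.Free O L2) ∧
    (Module.Finite O L3 ∧ Module.Free O L3) ∧
    (Function.Injective
        ⇑((f.restrictScalars O).restrict (p := L1) (q := L2) fun x hx => hx) ∧
      Function.Surjective
        ⇑((g.restrictScalars O).restrict (p := L2) (q := L3) fun x hx =>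
            Submodule.mem_map_of_mem hx) ∧
      LinearMap.range ((f.restrictScalars O).restrict (p := L1) (q := L2) fun x hx => hx) =
        LinearMap.ker ((g.restrictScalars O).restrict (p := L2) (q := L3) fun x hx =>
          Submodule.mem_map_of_mem hx)) ∧
    ∃ h : ↥L2 →ₗ[O] ↥L1,
      h.comp ((f.restrictScalars O).restrict (p := L1) (q := L2) fun x hx => hx) =
        LinearMap.id := by
  intro L1 L3
  obtain ⟨hL2fg, hL2span⟩ := hL2
  set f' := (f.restrictScalars O).restrict (p := L1) (q := L2) fun _ hx => hx
  set g' := (g.restrictScalars O).restrict (p := L2) (q := L3) fun _ hx =>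
    Submodule.mem_map_of_mem hx
  have hf' : Function.Injective f' := LinearMap.injective_restrict_comap L2 hf
  have hg' : Function.Surjective g' := LinearMap.surjective_restrict_map L2
  have hexact : Function.Exact f' g' :=
    Function.Exact.restrict_comap_map (f := f.restrictScalars O) (g := g.restrictScalars O) L2
      (LinearMap.exact_iff.mpr hfg.symm : Function.Exact f g)
  have hL3fg : L3.FG := hL2fg.map _
  have hL2fin : Module.Finite O L2 := Module.Finite.iff_fg.mpr hL2fg
  have hL3fin : Module.Finite O L3 := Module.Finite.iff_fg.mpr hL3fg
  have hL2free : Module.Free O L2 := L2.free_of_valuationRing K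
  have hL3free : Module.Free O L3 := L3.free_of_valuationRing K
  obtain ⟨r, hr⟩ := hexact.exists_retraction_of_projective hf' hg'
  have hL1fin : Module.Finite O L1 :=
    .of_surjective r fun x => ⟨f' x, LinearMap.congr_fun hr x⟩
  exact ⟨⟨Module.Finite.iff_fg.mp hL1fin, L2.span_comap_eq_top f hL2span⟩,
    ⟨hL3fg, L2.span_map_eq_top hg hL2span⟩, ⟨hL1fin, L1.free_of_valuationRing K⟩,
    ⟨hL2fin, hL2free⟩, ⟨hL3fin, hL3free⟩, ⟨hf', hg', (LinearMap.exact_iff.mp hexact).symm⟩,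
    r, hr⟩

/-- Let `0 → V1 → V2 → V3 → 0` be an exact sequence of finite-dimensional
vector spaces over the fraction field `K` of a valuation ring `O`, and `L2` an `O`-lattice
in `V2`.  Then the preimage `L1` of `L2` in `V1` and the image `L3` of `L2` in `V3` are
`O`-lattices, all three lattices are finite free `O`-modules, and the resulting short exact
sequence `0 → L1 → L2 → L3 → 0` of `O`-modules splits. -/
theorem statement10 {O : Type*} [CommRing O] [IsDomain O] [ValuationRing O]
    {K : Type*} [Field K] [Algebra O K] [IsFractionRing O K]
    {V1 V2 V3 : Type*}
    [AddCommGroup V1] [Module K V1] [Module O V1] [IsScalarTower O K V1]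
    [AddCommGroup V2] [Module K V2] [Module O V2] [IsScalarTower O K V2]
    [AddCommGroup V3] [Module K V3] [Module O V3] [IsScalarTower O K V3]
    [FiniteDimensional K V1] [FiniteDimensional K V2] [FiniteDimensional K V3]
    (f : V1 →ₗ[K] V2) (g : V2 →ₗ[K] V3)
    (hf : Function.Injective f) (hg : Function.Surjective g)
    (hfg : LinearMap.range f = LinearMap.ker g)
    (L2 : Submodule O V2)
    (hL2 : L2.FG ∧ Submodule.span K (L2 : Set V2) = ⊤) :
    let L1 : Submodule O V1 := Submodule.comap (f.restrictScalars O) L2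
    let L3 : Submodule O V3 := Submodule.map (g.restrictScalars O) L2
    (L1.FG ∧ Submodule.span K (L1 : Set V1) = ⊤) ∧
    (L3.FG ∧ Submodule.span K (L3 : Set V3) = ⊤) ∧
    (Module.Finite O L1 ∧ Module.Free O L1) ∧
    (Module.Finite O L2 ∧ Module.Free O L2) ∧
    (Module.Finite O L3 ∧ Module.Free O L3) ∧
    (Function.Injective
        ⇑((f.restrictScalars O).restrict (p := L1) (q := L2) fun x hx => hx) ∧
      Function.Surjective
        ⇑((g.restrictScalars O).restrict (p := L2) (q := L3) fun x hx =>
            Submodule.mem_map_of_mem hx) ∧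
      LinearMap.range ((f.restrictScalars O).restrict (p := L1) (q := L2) fun x hx => hx) =
        LinearMap.ker ((g.restrictScalars O).restrict (p := L2) (q := L3) fun x hx =>
          Submodule.mem_map_of_mem hx)) ∧
    ∃ h : ↥L2 →ₗ[O] ↥L1,
      h.comp ((f.restrictScalars O).restrict (p := L1) (q := L2) fun x hx => hx) =
        LinearMap.id :=
  statement10_general f g hf hg hfg L2 hL2
end

section
/- Let M be an O-module admitting a finite filtration 0 = M_0 ⊊ M_1 ⊊ ⋯ ⊊ M_r = M by O-submodules such that for each 1 ≤ i ≤ r there is an isomorphism of O-modules M_i/M_{i-1} ≅ O/(x_i) for some nonzero x_i ∈ O. If 0 = M'_0 ⊊ M'_1 ⊊ ⋯ ⊊ M'_{r'} = M is another such filtration, with M'_j/M'_{j-1} ≅ O/(y_j) for nonzero y_j ∈ O, then the principal ideals (x_1 ⋯ x_r) and (y_1 ⋯ y_{r'}) of O are equal. (This is the invariance of the ideal δ(M), and hence of the generalized length, under the choice of good filtration.) -/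
open Submodule

lemma prod_telescope {G : Type*} [CommMonoid G] :
    ∀ {n : ℕ} (f : Fin (n + 1) → G) (g : Fin n → G),
      (∀ i : Fin n, f i.castSucc = g i * f i.succ) → f 0 = (∏ i, g i) * f (Fin.last n) := by
  intro n
  induction n with
  | zero => intro f g _; simp
  | succ n ih =>
    intro f g h
    have h1 := ih (fun i => f i.succ) (fun i => g i.succ) (fun i => by
      rw [Fin.succ_castSucc]
      exact h i.succ)
    have h0 := h 0
    rw [Fin.castSucc_zero] at h0
    rw [h0, Fin.prod_univ_succ, mul_assoc, h1, Fin.succ_last]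

def CyclicStep {O M : Type*} [CommRing O] [AddCommGroup M] [Module O M]
    (A B : Submodule O M) (x : O) : Prop :=
  ∃ g ∈ B, B ≤ A ⊔ Submodule.span O {g} ∧ ∀ a : O, a • g ∈ A ↔ x ∣ a

lemma cyclicStep_of_equiv {O : Type*} [CommRing O] {M : Type*} [AddCommGroup M] [Module O M]
    {A B : Submodule O M} {x : O}
    (e : (↥B ⧸ Submodule.comap B.subtype A) ≃ₗ[O] O ⧸ Ideal.span {x}) :
    CyclicStep A B x := by
  obtain ⟨g', hg'⟩ := Submodule.Quotient.mk_surjective _ (e.symm (Ideal.Quotient.mk _ 1))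
  have he : e (Submodule.Quotient.mk g') = Ideal.Quotient.mk _ 1 := by
    rw [hg', e.apply_symm_apply]
  have hsm : ∀ a : O, a • (Ideal.Quotient.mk (Ideal.span {x}) 1) = Ideal.Quotient.mk _ a := by
    intro a
    rw [← Ideal.Quotient.mk_eq_mk, ← Ideal.Quotient.mk_eq_mk, ← Submodule.Quotient.mk_smul,
      smul_eq_mul, mul_one]
  refine ⟨(g' : M), g'.2, ?_, fun a => ?_⟩
  · intro m hm
    obtain ⟨a, ha⟩ := Ideal.Quotient.mk_surjective (e (Submodule.Quotient.mk ⟨m, hm⟩))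
    have hkey : Submodule.Quotient.mk (p := Submodule.comap B.subtype A) ⟨m, hm⟩
        = Submodule.Quotient.mk (a • g') := by
      apply e.injective
      rw [Submodule.Quotient.mk_smul, map_smul, he, hsm, ha]
    have hd : m - a • (g' : M) ∈ A := by
      have := (Submodule.Quotient.eq _).mp hkey
      simpa using this
    exact Submodule.mem_sup.mpr ⟨m - a • (g' : M), hd, a • (g' : M),
      Submodule.smul_mem _ _ (Submodule.mem_span_singleton_self _), by abel⟩
  · rw [show (a • (g' : M) ∈ A) ↔ a • g' ∈ Submodule.comap B.subtype A from by simp,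
      ← Submodule.Quotient.mk_eq_zero, Submodule.Quotient.mk_smul,
      ← e.map_eq_zero_iff, map_smul, he, hsm,
      Ideal.Quotient.eq_zero_iff_mem, Ideal.mem_span_singleton]
lemma CyclicStep.comapSubtype {O : Type*} [CommRing O] {M : Type*} [AddCommGroup M] [Module O M]
    {A B N : Submodule O M} (hBN : B ≤ N) {x : O} (h : CyclicStep A B x) :
    CyclicStep (A.comap N.subtype) (B.comap N.subtype) x := by
  obtain ⟨g, hgB, hspan, hcond⟩ := h
  refine ⟨⟨g, hBN hgB⟩, by simpa using hgB, ?_, fun a => ?_⟩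
  · rintro ⟨m, hmN⟩ hm
    have hmB : m ∈ B := hm
    obtain ⟨u, hu, z, hz, huz⟩ := Submodule.mem_sup.mp (hspan hmB)
    obtain ⟨t, rfl⟩ := Submodule.mem_span_singleton.mp hz
    refine Submodule.mem_sup.mpr ⟨⟨m, hmN⟩ - t • ⟨g, hBN hgB⟩, ?_, t • ⟨g, hBN hgB⟩,
      Submodule.smul_mem _ _ (Submodule.mem_span_singleton_self _), by abel⟩
    have h2 : m - t • g ∈ A := by
      have h3 : u = m - t • g := eq_sub_iff_add_eq.mpr huz
      exact h3 ▸ hu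
    simpa using h2
  · have h2 := hcond a
    simpa using h2

lemma key_devissage {O : Type*} [CommRing O] [IsDomain O] [ValuationRing O]
    {M : Type*} [AddCommGroup M] [Module O M]
    {N : Submodule O M} {g : M} {b : O} (hb : b ≠ 0)
    (hgen : ∀ m : M, m ∈ N ⊔ Submodule.span O {g})
    (hgN : ∀ a : O, a • g ∈ N ↔ b ∣ a)
    {r : ℕ} (c : Fin (r + 1) → Submodule O M) (x : Fin r → O)
    (hmono : Monotone c) (hc0 : c 0 = ⊥) (hctop : c (Fin.last r) = ⊤) (hx : ∀ i, x i ≠ 0)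
    (hcx : ∀ i : Fin r, CyclicStep (c i.castSucc) (c i.succ) (x i)) :
    ∃ xt : Fin r → O, (∀ i, xt i ≠ 0) ∧
      (∀ i : Fin r,
        CyclicStep ((c i.castSucc).comap N.subtype) ((c i.succ).comap N.subtype) (xt i)) ∧
      Ideal.span {∏ i, x i} = Ideal.span {b} * Ideal.span {∏ i, xt i} := by
  classical
  choose gi hgiB hgispan hgicond using hcx
  have hdec : ∀ i : Fin r, ∃ nn ∈ N, ∃ ww : O, gi i = nn + ww • g := by
    intro i
    obtain ⟨u, hu, z, hz, huz⟩ := Submodule.mem_sup.mp (hgen (gi i))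
    obtain ⟨w, rfl⟩ := Submodule.mem_span_singleton.mp hz
    exact ⟨u, hu, w, huz.symm⟩
  choose n hnN w hw using hdec
  set J : Fin (r + 1) → Ideal O :=
    fun k => (N ⊔ c k).comap (LinearMap.toSpanSingleton O M g) with hJ
  have hJmem : ∀ (k) (a : O), a ∈ J k ↔ a • g ∈ N ⊔ c k := by
    intro k a
    simp [hJ, Submodule.mem_comap, LinearMap.toSpanSingleton_apply]
  have hJmono : Monotone J := fun k l hkl =>
    Submodule.comap_mono (sup_le_sup_left (hmono hkl) N)
  have hJ0 : J 0 = Ideal.span {b} := by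
    ext a
    rw [hJmem, hc0, sup_bot_eq, Ideal.mem_span_singleton, hgN]
  have hJtop : J (Fin.last r) = ⊤ := by
    rw [eq_top_iff]
    intro a _
    rw [hJmem, hctop, sup_top_eq]
    trivial
  have hwJ : ∀ i : Fin r, w i ∈ J i.succ := by
    intro i
    rw [hJmem]
    have h1 : w i • g = gi i - n i := by rw [hw i]; abel
    rw [h1]
    exact sub_mem (Submodule.mem_sup_right (hgiB i)) (Submodule.mem_sup_left (hnN i))
  have hJeq : ∀ i : Fin r, J i.succ = J i.castSucc ⊔ Ideal.span {w i} := by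
    intro i
    refine le_antisymm ?_ (sup_le (hJmono (Fin.castSucc_le_succ i))
      ((Ideal.span_singleton_le_iff_mem _).mpr (hwJ i)))
    intro a ha
    rw [hJmem] at ha
    have h1 : a • g ∈ (N ⊔ c i.castSucc) ⊔ Submodule.span O {gi i} := by
      obtain ⟨u, hu, z, hz, huz⟩ := Submodule.mem_sup.mp ha
      obtain ⟨v1, hv1, v2, hv2, hv12⟩ := Submodule.mem_sup.mp (hgispan i hz)
      rw [← huz, ← hv12]
      exact add_mem (Submodule.mem_sup_left (Submodule.mem_sup_left hu))
        (add_mem (Submodule.mem_sup_left (Submodule.mem_sup_right hv1))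
          (Submodule.mem_sup_right hv2))
    obtain ⟨p, hp, z, hz, hpz⟩ := Submodule.mem_sup.mp h1
    obtain ⟨t, rfl⟩ := Submodule.mem_span_singleton.mp hz
    have hkey : (a - t * w i) • g ∈ N ⊔ c i.castSucc := by
      have h2 : (a - t * w i) • g = p + t • n i := by
        rw [sub_smul, ← hpz, hw i, smul_add, mul_smul, smul_smul]
        abel
      rw [h2]
      exact add_mem hp (Submodule.mem_sup_left (Submodule.smul_mem _ _ (hnN i)))
    have h3 : a - t * w i ∈ J i.castSucc := by rw [hJmem]; exact hkey
    exact Submodule.mem_sup.mpr ⟨a - t * w i, h3, t * w i,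
      Ideal.mem_span_singleton.mpr (dvd_mul_left _ _), by ring⟩
  have hJfg : ∀ k, (J k).FG := by
    intro k
    induction k using Fin.induction with
    | zero => rw [hJ0]; exact ⟨{b}, by simp⟩
    | succ i ih => rw [hJeq i]; exact Submodule.FG.sup ih ⟨{w i}, by simp⟩
  have hprin : ∀ k, ∃ bk : O, bk ≠ 0 ∧ J k = Ideal.span {bk} := by
    intro k
    obtain ⟨bk, hbk⟩ := (IsBezout.isPrincipal_of_FG (J k) (hJfg k)).principal
    refine ⟨bk, ?_, by rw [hbk]⟩
    rintro rfl
    apply hb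
    have hbmem : b ∈ J k :=
      hJmono (Fin.zero_le k) (by rw [hJ0]; exact Submodule.mem_span_singleton_self _)
    rw [hbk, Submodule.span_zero_singleton] at hbmem
    exact (Submodule.mem_bot O).mp hbmem
  choose bb hbb0 hbbJ using hprin
  have hqd : ∀ i : Fin r, ∃ qi : O, bb i.castSucc = bb i.succ * qi := by
    intro i
    have h1 : Ideal.span {bb i.castSucc} ≤ Ideal.span {bb i.succ} := by
      rw [← hbbJ, ← hbbJ]; exact hJmono (Fin.castSucc_le_succ i)
    exact Ideal.span_singleton_le_span_singleton.mp h1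
  choose q hq using hqd
  have hq0 : ∀ i, q i ≠ 0 := by
    intro i h0
    apply hbb0 i.castSucc
    rw [hq i, h0, mul_zero]
  have hvd : ∀ i : Fin r, ∃ vi : O, w i = bb i.succ * vi :=
    fun i => Ideal.mem_span_singleton.mp (by rw [← hbbJ]; exact hwJ i)
  choose v hv using hvd
  have hbez : ∀ i : Fin r, ∃ cc t : O, 1 = cc * q i + t * v i := by
    intro i
    have h1 : bb i.succ ∈ J i.castSucc ⊔ Ideal.span {w i} := by
      rw [← hJeq i, hbbJ]; exact Submodule.mem_span_singleton_self _
    obtain ⟨p, hp, z, hz, hpz⟩ := Submodule.mem_sup.mp h1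
    rw [hbbJ] at hp
    obtain ⟨cc, hcc⟩ := Ideal.mem_span_singleton.mp hp
    obtain ⟨t, ht⟩ := Ideal.mem_span_singleton.mp hz
    refine ⟨cc, t, ?_⟩
    apply mul_left_cancel₀ (hbb0 i.succ)
    rw [mul_one, mul_add]
    calc bb i.succ = p + z := hpz.symm
      _ = bb i.castSucc * cc + w i * t := by rw [hcc, ht]
      _ = bb i.succ * (cc * q i) + bb i.succ * (t * v i) := by rw [hq i, hv i]; ring
  have hqx : ∀ i : Fin r, ∃ xti : O, x i = q i * xti := by
    intro i
    have h2 : x i • gi i ∈ c i.castSucc := (hgicond i (x i)).mpr dvd_rfl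
    have h1 : (x i * w i) • g ∈ N ⊔ c i.castSucc := by
      have h3 : (x i * w i) • g = x i • gi i - x i • n i := by
        rw [hw i, smul_add, smul_smul]
        abel
      rw [h3]
      exact sub_mem (Submodule.mem_sup_right h2)
        (Submodule.mem_sup_left (Submodule.smul_mem _ _ (hnN i)))
    have h4 := (hJmem i.castSucc (x i * w i)).mpr h1
    rw [hbbJ] at h4
    obtain ⟨s, hs⟩ := Ideal.mem_span_singleton.mp h4
    have h5 : x i * v i = q i * s := by
      apply mul_left_cancel₀ (hbb0 i.succ)
      calc bb i.succ * (x i * v i) = x i * (bb i.succ * v i) := by ring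
        _ = x i * w i := by rw [← hv i]
        _ = bb i.castSucc * s := hs
        _ = bb i.succ * (q i * s) := by rw [hq i]; ring
    obtain ⟨cc, t, hbz⟩ := hbez i
    refine ⟨cc * x i + t * s, ?_⟩
    calc x i = x i * 1 := (mul_one _).symm
      _ = x i * (cc * q i + t * v i) := by rw [← hbz]
      _ = cc * x i * q i + t * (x i * v i) := by ring
      _ = cc * x i * q i + t * (q i * s) := by rw [h5]
      _ = q i * (cc * x i + t * s) := by ring
  choose xt hxt using hqx
  have hxt0 : ∀ i, xt i ≠ 0 := by
    intro i h0
    apply hx i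
    rw [hxt i, h0, mul_zero]
  refine ⟨xt, hxt0, ?_, ?_⟩
  · intro i
    have h1 : (q i * w i) • g ∈ N ⊔ c i.castSucc := by
      have h2 : q i * w i ∈ Ideal.span {bb i.castSucc} :=
        Ideal.mem_span_singleton.mpr ⟨v i, by rw [hv i, hq i]; ring⟩
      rw [← hbbJ] at h2
      exact (hJmem _ _).mp h2
    obtain ⟨n', hn', ce, hce, hsum⟩ := Submodule.mem_sup.mp h1
    set hel : M := q i • gi i - ce with hhel
    have hel_eq : hel = q i • n i + n' := by
      rw [hhel, hw i, smul_add, smul_smul, ← hsum]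
      abel
    have helN : hel ∈ N := by
      rw [hel_eq]; exact add_mem (Submodule.smul_mem _ _ (hnN i)) hn'
    have helB : hel ∈ c i.succ := by
      rw [hhel]
      exact sub_mem (Submodule.smul_mem _ _ (hgiB i)) (hmono (Fin.castSucc_le_succ i) hce)
    refine ⟨⟨hel, helN⟩, by simpa using helB, ?_, ?_⟩
    · rintro ⟨m, hmN⟩ hm
      have hmB : m ∈ c i.succ := hm
      obtain ⟨u, hu, z, hz, huz⟩ := Submodule.mem_sup.mp (hgispan i hmB)
      obtain ⟨t, rfl⟩ := Submodule.mem_span_singleton.mp hz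
      have h2 : (t * w i) • g ∈ N ⊔ c i.castSucc := by
        have h3 : (t * w i) • g = (m - u) - t • n i := by
          rw [← huz, hw i, smul_add, smul_smul]
          abel
        rw [h3]
        exact sub_mem (sub_mem (Submodule.mem_sup_left hmN) (Submodule.mem_sup_right hu))
          (Submodule.mem_sup_left (Submodule.smul_mem _ _ (hnN i)))
      have h4 := (hJmem i.castSucc _).mpr h2
      rw [hbbJ] at h4
      obtain ⟨s, hs⟩ := Ideal.mem_span_singleton.mp h4
      have h5 : t * v i = q i * s := by
        apply mul_left_cancel₀ (hbb0 i.succ)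
        calc bb i.succ * (t * v i) = t * (bb i.succ * v i) := by ring
          _ = t * w i := by rw [← hv i]
          _ = bb i.castSucc * s := hs
          _ = bb i.succ * (q i * s) := by rw [hq i]; ring
      obtain ⟨cc, tt, hbz⟩ := hbez i
      have hqt : q i ∣ t := by
        refine ⟨cc * t + tt * s, ?_⟩
        calc t = t * 1 := (mul_one t).symm
          _ = t * (cc * q i + tt * v i) := by rw [← hbz]
          _ = cc * t * q i + tt * (t * v i) := by ring
          _ = cc * t * q i + tt * (q i * s) := by rw [h5]
          _ = q i * (cc * t + tt * s) := by ring
      obtain ⟨t', rfl⟩ := hqt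
      have hmemA : m - t' • hel ∈ c i.castSucc := by
        have h6 : m - t' • hel = u + t' • ce := by
          rw [← huz, hhel, smul_sub, smul_smul, mul_comm t' (q i)]
          abel
        rw [h6]
        exact add_mem hu (Submodule.smul_mem _ _ hce)
      refine Submodule.mem_sup.mpr ⟨⟨m, hmN⟩ - t' • ⟨hel, helN⟩, by simpa using hmemA,
        t' • ⟨hel, helN⟩, Submodule.smul_mem _ _ (Submodule.mem_span_singleton_self _), by abel⟩
    · intro a
      have hcoe : (a • (⟨hel, helN⟩ : ↥N) ∈ (c i.castSucc).comap N.subtype) ↔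
          a • hel ∈ c i.castSucc := by
        simp [Submodule.mem_comap]
      rw [hcoe]
      have h6 : a • hel ∈ c i.castSucc ↔ (a * q i) • gi i ∈ c i.castSucc := by
        constructor
        · intro hmem
          have h7 : (a * q i) • gi i = a • hel + a • ce := by
            rw [hhel, smul_sub, smul_smul]
            abel
          rw [h7]
          exact add_mem hmem (Submodule.smul_mem _ _ hce)
        · intro hmem
          have h7 : a • hel = (a * q i) • gi i - a • ce := by
            rw [hhel, smul_sub, smul_smul]
          rw [h7]
          exact sub_mem hmem (Submodule.smul_mem _ _ hce)
      rw [h6, hgicond i]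
      constructor
      · rintro ⟨k, hk⟩
        refine ⟨k, ?_⟩
        apply mul_left_cancel₀ (hq0 i)
        calc q i * a = a * q i := mul_comm _ _
          _ = x i * k := hk
          _ = q i * (xt i * k) := by rw [hxt i]; ring
      · rintro ⟨k, hk⟩
        exact ⟨k, by rw [hk, hxt i]; ring⟩
  · have htel := prod_telescope (fun k => Ideal.span {bb k}) (fun i => Ideal.span {q i})
      (fun i => by
        show Ideal.span {bb i.castSucc} = Ideal.span {q i} * Ideal.span {bb i.succ}
        rw [Ideal.span_singleton_mul_span_singleton, hq i, mul_comm])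
    have h1 : Ideal.span {bb 0} = Ideal.span {b} := by rw [← hbbJ, hJ0]
    have h2 : Ideal.span {bb (Fin.last r)} = ⊤ := by rw [← hbbJ, hJtop]
    have h3 : (∏ i, Ideal.span {q i} : Ideal O) = Ideal.span {b} := by
      rw [← h1, htel, h2, Ideal.mul_top]
    have h4 : ∏ i, x i = (∏ i, q i) * (∏ i, xt i) := by
      rw [← Finset.prod_mul_distrib]
      exact Finset.prod_congr rfl fun i _ => hxt i
    rw [h4, ← Ideal.span_singleton_mul_span_singleton, ← Ideal.prod_span_singleton, h3]
universe u

lemma main_ind {O : Type*} [CommRing O] [IsDomain O] [ValuationRing O] :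
    ∀ (r' : ℕ) {M : Type u} [AddCommGroup M] [Module O M]
      (c' : Fin (r' + 1) → Submodule O M) (y : Fin r' → O),
      Monotone c' → c' 0 = ⊥ → c' (Fin.last r') = ⊤ → (∀ j, y j ≠ 0) →
      (∀ j : Fin r', CyclicStep (c' j.castSucc) (c' j.succ) (y j)) →
      ∀ (r : ℕ) (c : Fin (r + 1) → Submodule O M) (x : Fin r → O),
        Monotone c → c 0 = ⊥ → c (Fin.last r) = ⊤ → (∀ i, x i ≠ 0) →
        (∀ i : Fin r, CyclicStep (c i.castSucc) (c i.succ) (x i)) →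
        Ideal.span {∏ i, x i} = Ideal.span {∏ j, y j} := by
  intro r'
  induction r' with
  | zero =>
    intro M _ _ c' y _ hc'0 hc'top _ _ r c x _ _ _ _ hcx
    have hbt : ∀ m : M, m = 0 := by
      intro m
      have h1 : m ∈ c' (Fin.last 0) := hc'top ▸ Submodule.mem_top
      rw [show Fin.last 0 = 0 from rfl, hc'0] at h1
      simpa using h1
    have hxu : ∀ i : Fin r, IsUnit (x i) := by
      intro i
      obtain ⟨g, _, _, hcond⟩ := hcx i
      apply isUnit_of_dvd_one
      rw [← hcond 1, hbt ((1 : O) • g)]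
      exact Submodule.zero_mem _
    have h1 : Ideal.span {∏ i, x i} = ⊤ := by
      rw [← Ideal.prod_span_singleton]
      calc (∏ i : Fin r, Ideal.span {x i})
          = ∏ _i : Fin r, (⊤ : Ideal O) :=
            Finset.prod_congr rfl fun i _ => Ideal.span_singleton_eq_top.mpr (hxu i)
        _ = ⊤ := by rw [← Ideal.one_eq_top]; exact Finset.prod_const_one
    rw [h1]
    have h2 : (∏ j : Fin 0, y j) = 1 := by simp
    rw [h2, Ideal.span_singleton_one]
  | succ r' ih =>
    intro M _ _ c' y hc'm hc'0 hc'top hy hc'y r c x hcm hc0 hctop hx hcx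
    set N : Submodule O M := c' (Fin.last r').castSucc with hN
    have htopstep : CyclicStep N ⊤ (y (Fin.last r')) := by
      have h1 := hc'y (Fin.last r')
      rwa [Fin.succ_last, hc'top] at h1
    obtain ⟨g, -, hgen', hgcond⟩ := htopstep
    have hgen : ∀ m : M, m ∈ N ⊔ Submodule.span O {g} := fun m => hgen' Submodule.mem_top
    obtain ⟨xt, hxt0, hxtcyc, hprod⟩ :=
      key_devissage (hy (Fin.last r')) hgen hgcond c x hcm hc0 hctop hx hcx
    have hIH := ih (fun j : Fin (r' + 1) => (c' j.castSucc).comap N.subtype)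
      (fun j : Fin r' => y j.castSucc)
      (fun j k hjk => Submodule.comap_mono (hc'm (Fin.castSucc_le_castSucc_iff.mpr hjk)))
      (by
        show (c' (Fin.castSucc 0)).comap N.subtype = ⊥
        rw [Fin.castSucc_zero, hc'0, Submodule.comap_bot, Submodule.ker_subtype])
      (by
        show (c' (Fin.last r').castSucc).comap N.subtype = ⊤
        rw [← hN]
        exact Submodule.comap_subtype_self N)
      (fun j => hy j.castSucc)
      (fun j => by
        have hle : c' j.castSucc.succ ≤ N := by
          rw [hN]
          exact hc'm (by rw [Fin.succ_castSucc]
                         exact Fin.castSucc_le_castSucc_iff.mpr (Fin.le_last _))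
        have h2 := (hc'y j.castSucc).comapSubtype (N := N) hle
        show CyclicStep ((c' (Fin.castSucc j).castSucc).comap N.subtype)
          ((c' j.succ.castSucc).comap N.subtype) (y j.castSucc)
        rwa [← Fin.succ_castSucc])
      r (fun k => (c k).comap N.subtype) xt
      (fun k l hkl => Submodule.comap_mono (hcm hkl))
      (by
        show (c 0).comap N.subtype = ⊥
        rw [hc0, Submodule.comap_bot, Submodule.ker_subtype])
      (by
        show (c (Fin.last r)).comap N.subtype = ⊤
        rw [hctop]
        exact Submodule.comap_top _)
      hxt0 hxtcyc
    rw [hprod, hIH, Ideal.span_singleton_mul_span_singleton,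
      Fin.prod_univ_castSucc (f := y), mul_comm (y (Fin.last r'))]


/-- Over a valuation ring `O`, if an `O`-module `M` has two good
filtrations `0 = M_0 ⊊ ⋯ ⊊ M_r = M` and `0 = M'_0 ⊊ ⋯ ⊊ M'_{r'} = M` with successive
quotients `M_i/M_{i-1} ≅ O/(x_i)` and `M'_j/M'_{j-1} ≅ O/(y_j)` for nonzero `x_i, y_j ∈ O`,
then `(x_1 ⋯ x_r) = (y_1 ⋯ y_{r'})` as ideals of `O`. -/
theorem statement11 {O : Type*} [CommRing O] [IsDomain O] [ValuationRing O]
    {M : Type*} [AddCommGroup M] [Module O M]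
    {r r' : ℕ} (c : Fin (r + 1) → Submodule O M) (c' : Fin (r' + 1) → Submodule O M)
    (x : Fin r → O) (y : Fin r' → O)
    (hc : StrictMono c) (hc0 : c 0 = ⊥) (hctop : c (Fin.last r) = ⊤)
    (hc' : StrictMono c') (hc'0 : c' 0 = ⊥) (hc'top : c' (Fin.last r') = ⊤)
    (hx : ∀ i, x i ≠ 0) (hy : ∀ j, y j ≠ 0)
    (hcx : ∀ i : Fin r,
      Nonempty ((↥(c i.succ) ⧸ Submodule.comap (c i.succ).subtype (c i.castSucc)) ≃ₗ[O]
        O ⧸ Ideal.span {x i}))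
    (hc'y : ∀ j : Fin r',
      Nonempty ((↥(c' j.succ) ⧸ Submodule.comap (c' j.succ).subtype (c' j.castSucc)) ≃ₗ[O]
        O ⧸ Ideal.span {y j})) :
    Ideal.span {∏ i, x i} = Ideal.span {∏ j, y j} := by
  classical
  exact main_ind r' c' y hc'.monotone hc'0 hc'top hy
    (fun j => cyclicStep_of_equiv (Classical.choice (hc'y j)))
    r c x hc.monotone hc0 hctop hx
    (fun i => cyclicStep_of_equiv (Classical.choice (hcx i)))
end

section
/- Let Γ be a totally ordered commutative additive group. Let (γ_1 ≥ γ_2 ≥ ⋯ ≥ γ_p) and (δ_1 ≥ δ_2 ≥ ⋯ ≥ δ_q) be nonincreasing finite sequences in Γ, and let (ε_1 ≥ ε_2 ≥ ⋯ ≥ ε_{p+q}) be the nonincreasing rearrangement of the concatenation of the two sequences. Then for every integer 0 ≤ r ≤ p+q: Σ_{i=1}^{r} ε_i = max { Σ_{i=1}^{s} γ_i + Σ_{i=1}^{t} δ_i : 0 ≤ s ≤ p, 0 ≤ t ≤ q, s + t = r }. (This identifies the partial sums of the convex sum γ ∗ δ of two types with the sup-convolution formula f_1 ∗ f_2(r)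 = max{ f_1(s) + f_2(t) : s+t=r } for the associated concave partial-sum functions.) -/
/-!
Both inequalities come from one fact: for an antitone `f : Fin n → Γ`, the sum of any `k` of its
values (counted with multiplicity) is at most the sum of its first `k` values, because the `j`-th
smallest index of a `k`-element set of indices is at least `j`. For `s + t = r` the first `s`
values of `γ` together with the first `t` values of `δ` are `r` values of `ε`, so their sum is at
most `Σ_{i<r} ε_i`. Conversely the first `r` values of `ε` split into `s` values of `γ` and `t`
values of `δ`, whose sums are bounded by the corresponding prefix sums.
-/

open Finset

theorem Fin.val_le_val_of_strictMono {k n : ℕ} {g : Fin k → Fin n} (hg : StrictMono g)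
    (j : Fin k) : (j : ℕ) ≤ g j :=
  calc (j : ℕ) = #(Iio j) := (Fin.card_Iio j).symm
    _ ≤ #(Iio (g j)) :=
      card_le_card_of_injOn g (fun i hi => by simpa using hg (by simpa using hi))
        hg.injective.injOn
    _ = g j := Fin.card_Iio _

theorem Fin.filter_val_lt_eq_map_castLEEmb {n r : ℕ} (hr : r ≤ n) :
    (univ.filter fun i : Fin n => (i : ℕ) < r) = univ.map (Fin.castLEEmb hr) := by
  ext i
  simp only [mem_filter, mem_univ, true_and, mem_map, Fin.coe_castLEEmb]
  exact ⟨fun h => ⟨⟨i, h⟩, rfl⟩, by rintro ⟨j, rfl⟩; exact j.isLt⟩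

theorem Multiset.exists_le_map_eq_of_le_map {α β : Type*} {f : α → β} {M : Multiset β}
    {s : Multiset α} (h : M ≤ s.map f) : ∃ s' ≤ s, s'.map f = M := by
  classical
  induction M using Multiset.induction generalizing s with
  | empty => exact ⟨0, zero_le s, rfl⟩
  | cons b M ih =>
    obtain ⟨a, ha, rfl⟩ :=
      Multiset.mem_map.mp (Multiset.mem_of_le h (Multiset.mem_cons_self b M))
    have hM : M ≤ (s.erase a).map f := by
      rw [Multiset.map_erase_of_mem f s ha]
      simpa using Multiset.erase_le_erase (f a) h
    obtain ⟨s', hs', rfl⟩ := ih hM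
    exact ⟨a ::ₘ s', (Multiset.cons_le_cons a hs').trans_eq (Multiset.cons_erase ha),
      Multiset.map_cons f a s'⟩

theorem Multiset.exists_add_eq_of_le_add {α : Type*} {M A B : Multiset α} (h : M ≤ A + B) :
    ∃ A' ≤ A, ∃ B' ≤ B, A' + B' = M := by
  classical
  refine ⟨M ∩ A, Multiset.inter_le_right, M - M ∩ A, ?_,
    add_tsub_cancel_of_le Multiset.inter_le_left⟩
  rw [Multiset.le_iff_count] at h ⊢
  intro x
  have hx := h x
  rw [Multiset.count_add] at hx
  rw [Multiset.count_sub, Multiset.count_inter]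
  omega

section PrefixValues

variable {α : Type*} {n : ℕ}

def prefixValues (f : Fin n → α) (r : ℕ) : Multiset α :=
  (univ.filter fun i : Fin n => (i : ℕ) < r).val.map f

theorem prefixValues_le (f : Fin n → α) (r : ℕ) : prefixValues f r ≤ univ.val.map f :=
  Multiset.map_le_map (val_le_iff.mpr (filter_subset _ _))

theorem card_prefixValues (f : Fin n → α) {r : ℕ} (hr : r ≤ n) :
    Multiset.card (prefixValues f r) = r := by
  rw [prefixValues, Multiset.card_map, card_val, Fin.card_filter_val_lt, min_eq_right hr]

variable {Γ : Type*} [AddCommMonoid Γ] [PartialOrder Γ] [IsOrderedAddMonoid Γ]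
  {f : Fin n → Γ}

theorem Antitone.sum_le_sum_filter_val_lt (hf : Antitone f) (T : Finset (Fin n)) :
    ∑ i ∈ T, f i ≤ ∑ i ∈ univ.filter fun i : Fin n => (i : ℕ) < #T, f i := by
  have hT : #T ≤ n := (card_le_univ T).trans_eq (Fintype.card_fin n)
  rw [← map_orderEmbOfFin_univ T rfl, sum_map, card_map, card_univ, Fintype.card_fin,
    Fin.filter_val_lt_eq_map_castLEEmb hT, sum_map]
  exact sum_le_sum fun j _ => hf (Fin.val_le_val_of_strictMono (T.orderEmbOfFin rfl).strictMono j)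

theorem Antitone.multiset_sum_le_sum_prefixValues (hf : Antitone f) {M : Multiset Γ}
    (hM : M ≤ univ.val.map f) : M.sum ≤ (prefixValues f (Multiset.card M)).sum := by
  obtain ⟨s, hs, rfl⟩ := Multiset.exists_le_map_eq_of_le_map hM
  rw [Multiset.card_map]
  exact hf.sum_le_sum_filter_val_lt ⟨s, Multiset.nodup_of_le hs univ.nodup⟩

end PrefixValues

/-- Let `Γ` be a totally ordered commutative additive group, `γ`, `δ`
nonincreasing finite sequences in `Γ` of lengths `p`, `q`, and `ε` the nonincreasing
rearrangement of their concatenation (a nonincreasing sequence of length `p + q` whose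
multiset of values is the sum of those of `γ` and `δ`).  Then for every `0 ≤ r ≤ p + q`,
`Σ_{i=1}^r ε_i = max { Σ_{i=1}^s γ_i + Σ_{i=1}^t δ_i : s ≤ p, t ≤ q, s + t = r }`. -/
theorem statement12 {Γ : Type*} [AddCommGroup Γ] [LinearOrder Γ] [IsOrderedAddMonoid Γ]
    {p q : ℕ} (γ : Fin p → Γ) (δ : Fin q → Γ) (ε : Fin (p + q) → Γ)
    (hγ : Antitone γ) (hδ : Antitone δ) (hε : Antitone ε)
    (hconcat : Multiset.map γ Finset.univ.val + Multiset.map δ Finset.univ.val =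
      Multiset.map ε Finset.univ.val) :
    ∀ r : ℕ, r ≤ p + q →
      IsGreatest
        {v : Γ | ∃ s t : ℕ, s ≤ p ∧ t ≤ q ∧ s + t = r ∧
          v = (∑ i ∈ Finset.univ.filter fun i : Fin p => (i : ℕ) < s, γ i) +
              (∑ i ∈ Finset.univ.filter fun i : Fin q => (i : ℕ) < t, δ i)}
        (∑ i ∈ Finset.univ.filter fun i : Fin (p + q) => (i : ℕ) < r, ε i) := by
  intro r hr
  have upper : ∀ s t, s ≤ p → t ≤ q → s + t = r →
      (prefixValues γ s).sum + (prefixValues δ t).sum ≤ (prefixValues ε r).sum := by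
    intro s t hs ht hst
    have hle : prefixValues γ s + prefixValues δ t ≤ univ.val.map ε :=
      hconcat ▸ add_le_add (prefixValues_le γ s) (prefixValues_le δ t)
    have hsum := hε.multiset_sum_le_sum_prefixValues hle
    rwa [Multiset.sum_add, Multiset.card_add, card_prefixValues γ hs, card_prefixValues δ ht,
      hst] at hsum
  refine ⟨?_, fun v ⟨s, t, hs, ht, hst, hv⟩ => hv ▸ upper s t hs ht hst⟩
  obtain ⟨A, hA, B, hB, hAB⟩ :=
    Multiset.exists_add_eq_of_le_add (hconcat ▸ prefixValues_le ε r)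
  have hs : Multiset.card A ≤ p := by simpa using Multiset.card_le_card hA
  have ht : Multiset.card B ≤ q := by simpa using Multiset.card_le_card hB
  have hst : Multiset.card A + Multiset.card B = r := by
    rw [← Multiset.card_add, hAB, card_prefixValues ε hr]
  refine ⟨_, _, hs, ht, hst, le_antisymm ?_ (upper _ _ hs ht hst)⟩
  calc (prefixValues ε r).sum = A.sum + B.sum := by rw [← hAB, Multiset.sum_add]
    _ ≤ (prefixValues γ _).sum + (prefixValues δ _).sum :=
      add_le_add (hγ.multiset_sum_le_sum_prefixValues hA)
        (hδ.multiset_sum_le_sum_prefixValues hB)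
end
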